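/- (Haystack-in-the-needle.) Let I be an informativeness predicate on subsets of ℤ^d satisfying the SIN assumption, let r ≥ 0, and let G ⊆ ℤ^d be an informative voxel group (I(G) holds) containing at least two voxels. Then every voxel w with G ⊆ S_r(w) satisfies I(S_r(w)), and the set {w ∈ ℤ^d : G ⊆ S_r(w)} of such searchlight centers has cardinality strictly less than N_r, the cardinality of S_r(v) for any voxel v. Hence an informative multivoxel group is guaranteed to produce a strictly smaller cluster on the information map than a single informative voxel would. -/
import Mathlib


/-- Euclidean distance between voxels in the integer lattice `ℤ^d`. -/
noncomputable def vdist {d : ℕ} (v w : Fin d → ℤ) : ℝ :=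
  Real.sqrt (∑ i, ((v i : ℝ) - (w i : ℝ)) ^ 2)

/-- The searchlight of radius `r` centered at voxel `v`. -/
def searchlight {d : ℕ} (r : ℝ) (v : Fin d → ℤ) : Set (Fin d → ℤ) :=
  {w | vdist w v ≤ r}

/-- The superset-informativeness (SIN) assumption. -/
def SIN {d : ℕ} (I : Set (Fin d → ℤ) → Prop) : Prop :=
  ∀ G H : Set (Fin d → ℤ), G.Nonempty → I G → G ⊆ H → I H

lemma vdist_symm {d : ℕ} (v w : Fin d → ℤ) : vdist v w = vdist w v := by
  unfold vdist; congr 1; exact Finset.sum_congr rfl fun i _ => by ring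

lemma abs_coord_le_vdist {d : ℕ} (v w : Fin d → ℤ) (i : Fin d) :
    |((v i : ℝ)) - w i| ≤ vdist v w := by
  rw [← Real.sqrt_sq_eq_abs, vdist]
  exact Real.sqrt_le_sqrt
    (Finset.single_le_sum (f := fun j => ((v j : ℝ) - w j) ^ 2)
      (fun j _ => sq_nonneg _) (Finset.mem_univ i))

lemma searchlight_finite {d : ℕ} (r : ℝ) (v : Fin d → ℤ) : (searchlight r v).Finite := by
  apply Set.Finite.subset
    (Set.Finite.pi (fun i : Fin d => Set.finite_Icc (v i - ⌈r⌉) (v i + ⌈r⌉)))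
  intro w hw
  rw [Set.mem_univ_pi]
  intro i
  have h1 : |((w i : ℝ)) - v i| ≤ r := le_trans (abs_coord_le_vdist w v i) hw
  rw [abs_le] at h1
  have hc : r ≤ (⌈r⌉ : ℝ) := Int.le_ceil r
  constructor
  · have : ((v i - ⌈r⌉ : ℤ) : ℝ) ≤ (w i : ℝ) := by push_cast; linarith [h1.1]
    exact_mod_cast this
  · have : (w i : ℝ) ≤ ((v i + ⌈r⌉ : ℤ) : ℝ) := by push_cast; linarith [h1.2]
    exact_mod_cast this

lemma vdist_add {d : ℕ} (v w t : Fin d → ℤ) : vdist (v + t) (w + t) = vdist v w := by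
  unfold vdist; congr 1
  apply Finset.sum_congr rfl
  intro i _
  simp only [Pi.add_apply]
  push_cast
  ring

lemma vdist_update {d : ℕ} (a : Fin d → ℤ) (i : Fin d) (n : ℤ) :
    vdist (Function.update a i (a i + n)) a = |(n : ℝ)| := by
  have hsum : ∑ j, ((Function.update a i (a i + n) j : ℝ) - a j) ^ 2 = (n : ℝ) ^ 2 := by
    rw [Finset.sum_eq_single i]
    · simp only [Function.update_self]; push_cast; ring
    · intro j _ hj; simp [Function.update_of_ne hj]
    · simp
  rw [vdist, hsum, Real.sqrt_sq_eq_abs]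

/-- Haystack-in-the-needle: an informative group of at least two voxels makes
every searchlight containing it informative, yet the set of centers of such
searchlights is strictly smaller than `N_r`. -/
theorem haystack_in_needle (d : ℕ) (hd : 1 ≤ d)
    (I : Set (Fin d → ℤ) → Prop) (hI : SIN I)
    (r : ℝ) (hr : 0 ≤ r) (G : Set (Fin d → ℤ))
    (hG : ∃ a ∈ G, ∃ b ∈ G, a ≠ b) (hGI : I G) :
    (∀ w : Fin d → ℤ, G ⊆ searchlight r w → I (searchlight r w)) ∧
      ∀ v : Fin d → ℤ,
        {w : Fin d → ℤ | G ⊆ searchlight r w}.ncard <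
          (searchlight r v).ncard := by
  obtain ⟨a, ha, b, hb, hab⟩ := hG
  refine ⟨fun w hw => hI G _ ⟨a, ha⟩ hGI hw, fun v => ?_⟩
  obtain ⟨i, hi⟩ : ∃ i, a i ≠ b i := by
    by_contra h; push_neg at h; exact hab (funext h)
  set m : ℤ := ⌊r⌋ with hm
  have hm0 : 0 ≤ m := Int.floor_nonneg.mpr hr
  set n : ℤ := if b i < a i then m else -m with hn
  set w₀ : Fin d → ℤ := Function.update a i (a i + n) with hw₀
  have habs : |n| = m := by
    rw [hn]; split <;> simp [abs_of_nonneg hm0]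
  have hwa : vdist w₀ a ≤ r := by
    rw [hw₀, vdist_update, ← Int.cast_abs, habs]
    exact Int.floor_le r
  have hbw : r < vdist b w₀ := by
    have hw0i : w₀ i = a i + n := by rw [hw₀]; simp
    have hcoord : m + 1 ≤ |b i - w₀ i| := by
      rw [hw0i, hn]
      rcases lt_or_gt_of_ne hi.symm with h | h
      · rw [if_pos h]
        have : b i - (a i + m) ≤ -(m + 1) := by omega
        exact le_abs.mpr (Or.inr (by omega))
      · rw [if_neg (by omega)]
        exact le_abs.mpr (Or.inl (by omega))
    have hcr : ((m : ℝ) + 1) ≤ |(b i : ℝ) - w₀ i| := by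
      have : ((m + 1 : ℤ) : ℝ) ≤ ((|b i - w₀ i| : ℤ) : ℝ) := by exact_mod_cast hcoord
      rw [Int.cast_abs] at this
      push_cast at this ⊢
      convert this using 2 <;> push_cast <;> ring
    have hlt : r < (m : ℝ) + 1 := Int.lt_floor_add_one r
    calc r < (m : ℝ) + 1 := hlt
      _ ≤ |(b i : ℝ) - w₀ i| := hcr
      _ ≤ vdist b w₀ := abs_coord_le_vdist b w₀ i
  have hwS : w₀ ∈ searchlight r a := hwa
  have hwC : w₀ ∉ {w : Fin d → ℤ | G ⊆ searchlight r w} := by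
    intro hmem
    exact absurd (hmem hb) (not_le.mpr hbw)
  have hCsub : {w : Fin d → ℤ | G ⊆ searchlight r w} ⊆ searchlight r a := by
    intro w hw
    have := hw ha
    simpa [searchlight, vdist_symm w a] using this
  have h2 : ({w : Fin d → ℤ | G ⊆ searchlight r w}).ncard < (searchlight r a).ncard :=
    Set.ncard_lt_ncard ⟨hCsub, fun h => hwC (h hwS)⟩ (searchlight_finite r a)
  have htrans : (searchlight r v).ncard = (searchlight r a).ncard := by
    have him : searchlight r v = (fun x => x + (v - a)) '' searchlight r a := by
      ext w
      simp only [Set.mem_image, searchlight, Set.mem_setOf_eq]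
      constructor
      · intro h
        refine ⟨w - (v - a), ?_, by ring⟩
        have heq := vdist_add (w - (v - a)) a (v - a)
        rw [show w - (v - a) + (v - a) = w by ring, show a + (v - a) = v by ring] at heq
        rw [← heq]; exact h
      · rintro ⟨x, hx, rfl⟩
        have heq := vdist_add x a (v - a)
        rw [show a + (v - a) = v by ring] at heq
        rw [heq]; exact hx
    rw [him, Set.ncard_image_of_injective _ (add_left_injective (v - a))]
  omega
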